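/- Let 1 < α ≤ 2 and define p₁ : ℝ → ℝ by p₁(x) = (1/π) ∫₀^∞ cos(ux) e^{−u^α} du. Then for every ε > 0 there exists a constant c(ε) < ∞ such that |x|^{α+1} |p₁(x)| ≤ c(ε) for all x with |x| > ε. -/

import Mathlib

/-!
Write `I(y) = ∫₀^∞ cos(uy) e^{-u^α} du`. Two integrations by parts (the boundary terms vanish
since `α > 1`) give `y² I(y) = α(α-1) A(y) - α² B(y)`, where `A` and `B` are the cosine
transforms of `u^{α-2} e^{-u^α}` and `u^{2α-2} e^{-u^α}`. A third one bounds `y B(y)` by the total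
variation of `u^{2α-2} e^{-u^α}`. The weight of `A` has an integrable singularity at `0`, so split
at `u = 1/y`: the head is at most `∫₀^{1/y} u^{α-2} du`, while on the tail the weight is
decreasing, as `α ≤ 2`, so its cosine transform is at most twice its value at `1/y`, divided
by `y`. Both are `O(y^{1-α})`, hence `y^{α+1} |I(y)|` is bounded for `y ≥ 1`; for
`|x| ≤ 1` the trivial bound `|I| ≤ ∫ e^{-u^α}` suffices.
-/

open MeasureTheory Real Set Filter Topology

section HalfLineIntegrationByParts

variable {f f' : ℝ → ℝ} {a : ℝ}

theorem MeasureTheory.IntegrableOn.cos_mul {s : Set ℝ} (hf : IntegrableOn f s) (y : ℝ) :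
    IntegrableOn (fun u => cos (u * y) * f u) s :=
  hf.bdd_mul (by fun_prop) (c := 1) (ae_of_all _ fun _ => abs_cos_le_one _)

theorem MeasureTheory.IntegrableOn.sin_mul {s : Set ℝ} (hf : IntegrableOn f s) (y : ℝ) :
    IntegrableOn (fun u => sin (u * y) * f u) s :=
  hf.bdd_mul (by fun_prop) (c := 1) (ae_of_all _ fun _ => abs_sin_le_one _)

theorem abs_integral_cos_mul_le {s : Set ℝ} (hf : IntegrableOn f s) (y : ℝ) :
    |∫ u in s, cos (u * y) * f u| ≤ ∫ u in s, |f u| :=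
  abs_integral_le_integral_abs.trans (integral_mono_of_nonneg (ae_of_all _ fun _ => abs_nonneg _)
    hf.abs (ae_of_all _ fun _ => (abs_mul _ _).trans_le
      (mul_le_of_le_one_left (abs_nonneg _) (abs_cos_le_one _))))

theorem abs_integral_sin_mul_le {s : Set ℝ} (hf : IntegrableOn f s) (y : ℝ) :
    |∫ u in s, sin (u * y) * f u| ≤ ∫ u in s, |f u| :=
  abs_integral_le_integral_abs.trans (integral_mono_of_nonneg (ae_of_all _ fun _ => abs_nonneg _)
    hf.abs (ae_of_all _ fun _ => (abs_mul _ _).trans_le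
      (mul_le_of_le_one_left (abs_nonneg _) (abs_sin_le_one _))))

theorem integral_Ioi_cos_mul_abs (x : ℝ) :
    ∫ u in Ioi 0, cos (u * |x|) * f u = ∫ u in Ioi 0, cos (u * x) * f u :=
  setIntegral_congr_fun measurableSet_Ioi fun u hu => by
    rw [← abs_of_pos (show (0 : ℝ) < u from hu), ← abs_mul, cos_abs, abs_of_pos hu]

theorem mul_integral_Ioi_cos_mul_eq (hcont : ContinuousWithinAt f (Ici a) a)
    (hderiv : ∀ u ∈ Ioi a, HasDerivAt f (f' u) u) (hf : IntegrableOn f (Ioi a))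
    (hf' : IntegrableOn f' (Ioi a)) (y : ℝ) :
    y * ∫ u in Ioi a, cos (u * y) * f u
      = -(sin (a * y) * f a) - ∫ u in Ioi a, sin (u * y) * f' u := by
  have hlim := tendsto_zero_of_hasDerivAt_of_integrableOn_Ioi hderiv hf' hf
  have hparts := integral_Ioi_of_hasDerivAt_of_tendsto (f := fun u => sin (u * y) * f u)
    (f' := fun u => y * (cos (u * y) * f u) + sin (u * y) * f' u) (m := 0)
    (((continuous_sin.comp (continuous_mul_const y)).continuousWithinAt).mul hcont)
    (fun u hu => (((hasDerivAt_mul_const y).sin).mul (hderiv u hu)).congr_deriv (by ring))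
    (((hf.cos_mul y).const_mul y).add (hf'.sin_mul y))
    (squeeze_zero_norm (fun u => by
      simpa [abs_mul] using mul_le_of_le_one_left (abs_nonneg (f u)) (abs_sin_le_one (u * y)))
      (by simpa using hlim.norm))
  rw [integral_add ((hf.cos_mul y).const_mul y) (hf'.sin_mul y), integral_const_mul] at hparts
  linarith

theorem mul_integral_Ioi_sin_mul_eq (hcont : ContinuousWithinAt f (Ici a) a)
    (hderiv : ∀ u ∈ Ioi a, HasDerivAt f (f' u) u) (hf : IntegrableOn f (Ioi a))
    (hf' : IntegrableOn f' (Ioi a)) (y : ℝ) :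
    y * ∫ u in Ioi a, sin (u * y) * f u
      = cos (a * y) * f a + ∫ u in Ioi a, cos (u * y) * f' u := by
  have hlim := tendsto_zero_of_hasDerivAt_of_integrableOn_Ioi hderiv hf' hf
  have hparts := integral_Ioi_of_hasDerivAt_of_tendsto (f := fun u => cos (u * y) * f u)
    (f' := fun u => cos (u * y) * f' u - y * (sin (u * y) * f u)) (m := 0)
    (((continuous_cos.comp (continuous_mul_const y)).continuousWithinAt).mul hcont)
    (fun u hu => (((hasDerivAt_mul_const y).cos).mul (hderiv u hu)).congr_deriv (by ring))
    ((hf'.cos_mul y).sub ((hf.sin_mul y).const_mul y))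
    (squeeze_zero_norm (fun u => by
      simpa [abs_mul] using mul_le_of_le_one_left (abs_nonneg (f u)) (abs_cos_le_one (u * y)))
      (by simpa using hlim.norm))
  rw [integral_sub (hf'.cos_mul y) ((hf.sin_mul y).const_mul y), integral_const_mul] at hparts
  linarith

theorem abs_mul_integral_Ioi_cos_mul_le (hcont : ContinuousWithinAt f (Ici a) a)
    (hderiv : ∀ u ∈ Ioi a, HasDerivAt f (f' u) u) (hf : IntegrableOn f (Ioi a))
    (hf' : IntegrableOn f' (Ioi a)) (y : ℝ) :
    |y * ∫ u in Ioi a, cos (u * y) * f u| ≤ |f a| + ∫ u in Ioi a, |f' u| := by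
  rw [mul_integral_Ioi_cos_mul_eq hcont hderiv hf hf', ← neg_add', abs_neg]
  exact (abs_add_le _ _).trans (add_le_add ((abs_mul _ _).trans_le
    (mul_le_of_le_one_left (abs_nonneg _) (abs_sin_le_one _))) (abs_integral_sin_mul_le hf' y))

theorem abs_mul_integral_Ioi_cos_mul_le_of_deriv_nonpos (hcont : ContinuousWithinAt f (Ici a) a)
    (hderiv : ∀ u ∈ Ioi a, HasDerivAt f (f' u) u) (hneg : ∀ u ∈ Ioi a, f' u ≤ 0)
    (hf : IntegrableOn f (Ioi a)) (hlim : Tendsto f atTop (𝓝 0)) (y : ℝ) :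
    |y * ∫ u in Ioi a, cos (u * y) * f u| ≤ 2 * f a := by
  have hf' := integrableOn_Ioi_deriv_of_nonpos hcont hderiv hneg hlim
  have hvar : ∫ u in Ioi a, |f' u| = f a := by
    rw [setIntegral_congr_fun measurableSet_Ioi fun u hu => abs_of_nonpos (hneg u hu),
      integral_neg, integral_Ioi_of_hasDerivAt_of_nonpos hcont hderiv hneg hlim]
    ring
  have hfa : 0 ≤ f a := hvar ▸ integral_nonneg fun u => abs_nonneg _
  have := abs_mul_integral_Ioi_cos_mul_le hcont hderiv hf hf' y
  rw [hvar, abs_of_nonneg hfa] at this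
  linarith

end HalfLineIntegrationByParts

section StableKernel

variable {α : ℝ}

theorem hasDerivAt_exp_neg_rpow {u : ℝ} (hu : 0 < u) :
    HasDerivAt (fun u => exp (-(u ^ α))) (-α * (u ^ (α - 1) * exp (-(u ^ α)))) u :=
  ((hasDerivAt_rpow_const (Or.inl hu.ne')).fun_neg.exp).congr_deriv (by ring)

theorem hasDerivAt_rpow_mul_exp_neg_rpow (s : ℝ) {u : ℝ} (hu : 0 < u) :
    HasDerivAt (fun u => u ^ s * exp (-(u ^ α)))
      (s * (u ^ (s - 1) * exp (-(u ^ α))) - α * (u ^ (s + α - 1) * exp (-(u ^ α)))) u := by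
  refine ((hasDerivAt_rpow_const (Or.inl hu.ne')).mul
    (hasDerivAt_exp_neg_rpow hu)).congr_deriv ?_
  rw [add_sub_assoc, rpow_add hu]
  ring

theorem continuousWithinAt_rpow_mul_exp_neg_rpow (hα : 0 ≤ α) {s : ℝ} (hs : 0 ≤ s) :
    ContinuousWithinAt (fun u => u ^ s * exp (-(u ^ α))) (Ici 0) 0 :=
  ((continuousAt_rpow_const 0 s (Or.inr hs)).mul
    (continuousAt_rpow_const 0 α (Or.inr hα)).fun_neg.rexp).continuousWithinAt

theorem integrableOn_deriv_rpow_mul_exp_neg_rpow (hα : 0 < α) {s : ℝ} (hs : 0 < s) :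
    IntegrableOn (fun u => s * (u ^ (s - 1) * exp (-(u ^ α)))
      - α * (u ^ (s + α - 1) * exp (-(u ^ α)))) (Ioi 0) :=
  ((integrableOn_rpow_mul_exp_neg_rpow (by linarith) hα).const_mul s).sub
    ((integrableOn_rpow_mul_exp_neg_rpow (by linarith) hα).const_mul α)

theorem tendsto_rpow_mul_exp_neg_rpow_atTop (hα : 0 < α) (s : ℝ) :
    Tendsto (fun u => u ^ s * exp (-(u ^ α))) atTop (𝓝 0) := by
  refine ((tendsto_rpow_mul_exp_neg_mul_atTop_nhds_zero (s / α) 1 one_pos).comp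
    (tendsto_rpow_atTop hα)).congr' ?_
  filter_upwards [eventually_ge_atTop 0] with u hu
  simp [← rpow_mul hu, mul_div_cancel₀ s hα.ne']

theorem integrableOn_exp_neg_rpow (hα : 0 < α) :
    IntegrableOn (fun u => exp (-(u ^ α))) (Ioi 0) := by
  simpa using integrableOn_rpow_mul_exp_neg_rpow (s := 0) (by norm_num) hα

theorem rpow_mul_exp_neg_rpow_le {u : ℝ} (hu : 0 ≤ u) (s : ℝ) :
    u ^ s * exp (-(u ^ α)) ≤ u ^ s :=
  mul_le_of_le_one_right (rpow_nonneg hu s)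
    (exp_le_one_iff.2 (neg_nonpos.2 (rpow_nonneg hu α)))

theorem mul_integral_cos_mul_exp_neg_rpow (hα : 0 < α) (y : ℝ) :
    y * ∫ u in Ioi 0, cos (u * y) * exp (-(u ^ α))
      = α * ∫ u in Ioi 0, sin (u * y) * (u ^ (α - 1) * exp (-(u ^ α))) := by
  rw [mul_integral_Ioi_cos_mul_eq
    (continuousAt_rpow_const 0 α (Or.inr hα.le)).fun_neg.rexp.continuousWithinAt
    (fun u hu => hasDerivAt_exp_neg_rpow hu) (integrableOn_exp_neg_rpow hα)
    ((integrableOn_rpow_mul_exp_neg_rpow (by linarith) hα).const_mul (-α))]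
  simp only [mul_left_comm (sin _) (-α), integral_const_mul]
  simp

theorem mul_integral_sin_mul_rpow_mul_exp_neg_rpow (hα : 0 < α) {s : ℝ} (hs : 0 < s) (y : ℝ) :
    y * ∫ u in Ioi 0, sin (u * y) * (u ^ s * exp (-(u ^ α)))
      = s * (∫ u in Ioi 0, cos (u * y) * (u ^ (s - 1) * exp (-(u ^ α))))
        - α * ∫ u in Ioi 0, cos (u * y) * (u ^ (s + α - 1) * exp (-(u ^ α))) := by
  rw [mul_integral_Ioi_sin_mul_eq (continuousWithinAt_rpow_mul_exp_neg_rpow hα.le hs.le)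
    (fun u hu => hasDerivAt_rpow_mul_exp_neg_rpow s hu)
    (integrableOn_rpow_mul_exp_neg_rpow (by linarith) hα)
    (integrableOn_deriv_rpow_mul_exp_neg_rpow hα hs)]
  simp only [mul_sub, mul_left_comm _ s, mul_left_comm _ α]
  rw [integral_sub (((integrableOn_rpow_mul_exp_neg_rpow (by linarith) hα).cos_mul y).const_mul s)
    (((integrableOn_rpow_mul_exp_neg_rpow (by linarith) hα).cos_mul y).const_mul α),
    integral_const_mul, integral_const_mul, zero_rpow hs.ne']
  simp

theorem abs_mul_integral_cos_mul_rpow_mul_exp_neg_rpow_le (hα : 0 < α) {s : ℝ} (hs : 0 < s)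
    (y : ℝ) :
    |y * ∫ u in Ioi 0, cos (u * y) * (u ^ s * exp (-(u ^ α)))|
      ≤ ∫ u in Ioi 0,
          |s * (u ^ (s - 1) * exp (-(u ^ α))) - α * (u ^ (s + α - 1) * exp (-(u ^ α)))| := by
  simpa [zero_rpow hs.ne'] using abs_mul_integral_Ioi_cos_mul_le
    (continuousWithinAt_rpow_mul_exp_neg_rpow hα.le hs.le)
    (fun u hu => hasDerivAt_rpow_mul_exp_neg_rpow s hu)
    (integrableOn_rpow_mul_exp_neg_rpow (by linarith) hα)
    (integrableOn_deriv_rpow_mul_exp_neg_rpow hα hs) y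

theorem abs_integral_Ioc_cos_mul_rpow_mul_exp_neg_rpow_le (hα : 0 < α) {s : ℝ} (hs : -1 < s)
    {b : ℝ} (hb : 0 ≤ b) (y : ℝ) :
    |∫ u in Ioc 0 b, cos (u * y) * (u ^ s * exp (-(u ^ α)))| ≤ b ^ (s + 1) / (s + 1) := by
  have hpow : IntegrableOn (fun u : ℝ => u ^ s) (Ioc 0 b) := by
    rw [← intervalIntegrable_iff_integrableOn_Ioc_of_le hb]
    exact intervalIntegral.intervalIntegrable_rpow' hs
  have hval : ∫ u in Ioc 0 b, u ^ s = b ^ (s + 1) / (s + 1) := by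
    rw [← intervalIntegral.integral_of_le hb, integral_rpow (Or.inl hs),
      zero_rpow (by linarith : s + 1 ≠ 0), sub_zero]
  have hint : IntegrableOn (fun u => u ^ s * exp (-(u ^ α))) (Ioc 0 b) :=
    (integrableOn_rpow_mul_exp_neg_rpow hs hα).mono_set Ioc_subset_Ioi_self
  refine (abs_integral_cos_mul_le hint y).trans (hval ▸ setIntegral_mono_on hint.abs hpow
    measurableSet_Ioc fun u hu => ?_)
  have hu0 : 0 < u := hu.1
  rw [abs_of_nonneg (by positivity)]
  exact rpow_mul_exp_neg_rpow_le hu0.le s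

theorem abs_mul_integral_Ioi_cos_mul_rpow_mul_exp_neg_rpow_le (hα : 0 < α) {s : ℝ} (hs : -1 < s)
    (hs0 : s ≤ 0) {b : ℝ} (hb : 0 < b) (y : ℝ) :
    |y * ∫ u in Ioi b, cos (u * y) * (u ^ s * exp (-(u ^ α)))| ≤ 2 * b ^ s := by
  refine (abs_mul_integral_Ioi_cos_mul_le_of_deriv_nonpos (f := fun u => u ^ s * exp (-(u ^ α)))
    ((continuousAt_rpow_const b s (Or.inl hb.ne')).mul
      (continuousAt_rpow_const b α (Or.inl hb.ne')).fun_neg.rexp).continuousWithinAt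
    (fun u hu => hasDerivAt_rpow_mul_exp_neg_rpow s (hb.trans hu)) (fun u hu => ?_)
    ((integrableOn_rpow_mul_exp_neg_rpow hs hα).mono_set (Ioi_subset_Ioi hb.le))
    (tendsto_rpow_mul_exp_neg_rpow_atTop hα s) y).trans ?_
  · have hu0 : 0 < u := hb.trans hu
    exact sub_nonpos_of_le ((mul_nonpos_of_nonpos_of_nonneg hs0 (by positivity)).trans
      (by positivity))
  · linarith [rpow_mul_exp_neg_rpow_le (α := α) hb.le s]

theorem abs_integral_cos_mul_rpow_mul_exp_neg_rpow_le (hα : 0 < α) {s : ℝ} (hs : -1 < s)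
    (hs0 : s ≤ 0) {y : ℝ} (hy : 0 < y) :
    |∫ u in Ioi 0, cos (u * y) * (u ^ s * exp (-(u ^ α)))| ≤ (1 / (s + 1) + 2) * y⁻¹ ^ (s + 1) := by
  have hb : 0 < y⁻¹ := inv_pos.2 hy
  have hint := (integrableOn_rpow_mul_exp_neg_rpow hs hα).cos_mul y
  have head := abs_integral_Ioc_cos_mul_rpow_mul_exp_neg_rpow_le hα hs hb.le y
  have tail := abs_mul_integral_Ioi_cos_mul_rpow_mul_exp_neg_rpow_le hα hs hs0 hb y
  rw [abs_mul, abs_of_pos hy] at tail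
  have htail : |∫ u in Ioi y⁻¹, cos (u * y) * (u ^ s * exp (-(u ^ α)))| ≤ 2 * y⁻¹ ^ (s + 1) :=
    calc _ = y⁻¹ * (y * |∫ u in Ioi y⁻¹, cos (u * y) * (u ^ s * exp (-(u ^ α)))|) := by
          field_simp
      _ ≤ y⁻¹ * (2 * y⁻¹ ^ s) := mul_le_mul_of_nonneg_left tail hb.le
      _ = 2 * y⁻¹ ^ (s + 1) := by rw [rpow_add_one hb.ne']; ring
  rw [← Ioc_union_Ioi_eq_Ioi hb.le, setIntegral_union Ioc_disjoint_Ioi_same measurableSet_Ioi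
    (hint.mono_set Ioc_subset_Ioi_self) (hint.mono_set (Ioi_subset_Ioi hb.le))]
  calc _ ≤ _ := abs_add_le _ _
    _ ≤ y⁻¹ ^ (s + 1) / (s + 1) + 2 * y⁻¹ ^ (s + 1) := add_le_add head htail
    _ = _ := by ring

theorem exists_rpow_mul_abs_integral_cos_mul_exp_neg_rpow_le (h1 : 1 < α) (h2 : α ≤ 2) :
    ∃ C, ∀ y, 1 ≤ y → y ^ (α + 1) * |∫ u in Ioi 0, cos (u * y) * exp (-(u ^ α))| ≤ C := by
  have hα : 0 < α := by linarith
  set K := ∫ u in Ioi 0, |(2 * α - 2) * (u ^ (2 * α - 2 - 1) * exp (-(u ^ α)))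
    - α * (u ^ (2 * α - 2 + α - 1) * exp (-(u ^ α)))|
  refine ⟨α * ((α - 1) * (1 / (α - 1) + 2) + α * K), fun y hy => ?_⟩
  have hy0 : 0 < y := by linarith
  set I := ∫ u in Ioi 0, cos (u * y) * exp (-(u ^ α))
  set A := ∫ u in Ioi 0, cos (u * y) * (u ^ (α - 2) * exp (-(u ^ α)))
  set B := ∫ u in Ioi 0, cos (u * y) * (u ^ (2 * α - 2) * exp (-(u ^ α)))
  have hI : y * (y * I) = α * ((α - 1) * A - α * B) := by
    rw [mul_integral_cos_mul_exp_neg_rpow hα, mul_left_comm,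
      mul_integral_sin_mul_rpow_mul_exp_neg_rpow hα (by linarith : 0 < α - 1),
      show α - 1 - 1 = α - 2 by ring, show α - 1 + α - 1 = 2 * α - 2 by ring]
  have hA : y ^ (α - 1) * |A| ≤ 1 / (α - 1) + 2 := by
    have := abs_integral_cos_mul_rpow_mul_exp_neg_rpow_le hα (s := α - 2) (by linarith)
      (by linarith) hy0
    rw [show α - 2 + 1 = α - 1 by ring, inv_rpow hy0.le] at this
    calc y ^ (α - 1) * |A| ≤ y ^ (α - 1) * ((1 / (α - 1) + 2) * (y ^ (α - 1))⁻¹) :=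
          mul_le_mul_of_nonneg_left this (by positivity)
      _ = 1 / (α - 1) + 2 := by field_simp
  have hB : y ^ (α - 1) * |B| ≤ K := by
    have := abs_mul_integral_cos_mul_rpow_mul_exp_neg_rpow_le hα (s := 2 * α - 2) (by linarith) y
    rw [abs_mul, abs_of_pos hy0] at this
    calc y ^ (α - 1) * |B| = y ^ (α - 2) * (y * |B|) := by
          rw [show α - 1 = α - 2 + 1 by ring, rpow_add_one hy0.ne']; ring
      _ ≤ 1 * K := mul_le_mul (rpow_le_one_of_one_le_of_nonpos hy (by linarith)) this
          (by positivity) zero_le_one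
      _ = K := one_mul K
  have hAB : |(α - 1) * A - α * B| ≤ (α - 1) * |A| + α * |B| :=
    calc _ ≤ |(α - 1) * A| + |α * B| := abs_sub _ _
      _ = _ := by rw [abs_mul, abs_mul, abs_of_pos (sub_pos.2 h1), abs_of_pos hα]
  calc y ^ (α + 1) * |I| = y ^ (α - 1) * |y * (y * I)| := by
        rw [abs_mul, abs_mul, abs_of_pos hy0, show α + 1 = α - 1 + 1 + 1 by ring,
          rpow_add_one hy0.ne', rpow_add_one hy0.ne']
        ring
    _ = α * (y ^ (α - 1) * |(α - 1) * A - α * B|) := by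
        rw [hI, abs_mul, abs_of_pos hα]
        ring
    _ ≤ α * ((α - 1) * (y ^ (α - 1) * |A|) + α * (y ^ (α - 1) * |B|)) := by
        gcongr
        linarith [mul_le_mul_of_nonneg_left hAB (by positivity : 0 ≤ y ^ (α - 1))]
    _ ≤ α * ((α - 1) * (1 / (α - 1) + 2) + α * K) := by gcongr

end StableKernel

theorem smalltime_prop52_b (α : ℝ) (h1 : 1 < α) (h2 : α ≤ 2)
    (p₁ : ℝ → ℝ)
    (hp : ∀ x : ℝ, p₁ x = (1 / π) * ∫ u in Ioi (0:ℝ), Real.cos (u * x) * Real.exp (-(u ^ α))) :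
    ∀ ε : ℝ, 0 < ε → ∃ c : ℝ, ∀ x : ℝ, ε < |x| → |x| ^ (α + 1) * |p₁ x| ≤ c := by
  intro _ _
  obtain ⟨C, hC⟩ := exists_rpow_mul_abs_integral_cos_mul_exp_neg_rpow_le h1 h2
  have hE := integrableOn_exp_neg_rpow (by linarith : 0 < α)
  refine ⟨π⁻¹ * max C (∫ u in Ioi 0, |exp (-(u ^ α))|), fun x _ => ?_⟩
  rw [hp, ← integral_Ioi_cos_mul_abs, abs_mul, one_div, abs_of_pos (inv_pos.2 pi_pos),
    mul_left_comm]
  gcongr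
  rcases le_or_gt |x| 1 with hx | hx
  · calc _ ≤ 1 * ∫ u in Ioi 0, |exp (-(u ^ α))| :=
          mul_le_mul (rpow_le_one (abs_nonneg x) hx (by linarith))
            (abs_integral_cos_mul_le hE |x|) (abs_nonneg _) zero_le_one
      _ ≤ _ := (one_mul _).trans_le (le_max_right _ _)
  · exact (hC _ hx.le).trans (le_max_left _ _)
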